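/- Let G be the star K_{1,n−1} of order n ≥ 4. Then cfc(G) = n − 1 and cfc(L(G)) = 1; moreover, for every integer k ≥ 2, cfc(L^k(G)) = 1 if n = 4, and cfc(L^k(G)) = 2 if n ≥ 5. -/

import Mathlib

open SimpleGraph

universe u

/-- An edge coloring makes `G` conflict-free connected: every two distinct vertices are
joined by a path on which some color appears on exactly one edge. -/
def IsCFCColoring {V : Type u} (G : SimpleGraph V) (c : Sym2 V → ℕ) : Prop :=
  ∀ u v : V, u ≠ v → ∃ p : G.Walk u v, p.IsPath ∧
    ∃ color : ℕ, (p.edges.map c).count color = 1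

/-- The conflict-free connection number: the least number of colors in a
conflict-free connection coloring. -/
noncomputable def cfcNum {V : Type u} (G : SimpleGraph V) : ℕ :=
  sInf {n : ℕ | ∃ c : Sym2 V → ℕ, (∀ e ∈ G.edgeSet, c e < n) ∧ IsCFCColoring G c}

/-- The line graph of `G`. -/
def lineG {V : Type u} (G : SimpleGraph V) : SimpleGraph G.edgeSet where
  Adj e f := e ≠ f ∧ ∃ v : V, v ∈ (e : Sym2 V) ∧ v ∈ (f : Sym2 V)
  symm := ⟨by rintro e f ⟨h, v, hv, hw⟩; exact ⟨h.symm, v, hw, hv⟩⟩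
  loopless := ⟨by rintro e ⟨h, _⟩; exact h rfl⟩

/-- The `k`-iterated line graph, as a bundled pair (vertex type, graph). -/
def iterLine {V : Type u} (G : SimpleGraph V) : ℕ → (W : Type u) × SimpleGraph W
  | 0 => ⟨V, G⟩
  | n + 1 => ⟨(iterLine G n).2.edgeSet, lineG (iterLine G n).2⟩

/-- The subgraph of `G` induced by the set of cut-edges (bridges) of `G`. -/
def cutG {V : Type u} (G : SimpleGraph V) : SimpleGraph V :=
  SimpleGraph.fromEdgeSet {e | G.IsBridge e}

/-- `h(G)`: the maximum of `cfcNum(K)` over connected components `K` of `C(G)`. -/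
noncomputable def hG {V : Type u} (G : SimpleGraph V) : ℕ :=
  sSup (Set.range fun K : (cutG G).ConnectedComponent => cfcNum ((cutG G).induce K.supp))

/-- `G` is claw-free: no induced `K_{1,3}`. -/
def ClawFree {V : Type u} (G : SimpleGraph V) : Prop :=
  ∀ v a b c : V, G.Adj v a → G.Adj v b → G.Adj v c →
    a ≠ b → a ≠ c → b ≠ c → ¬G.Adj a b → ¬G.Adj a c → ¬G.Adj b c → False

/-- `G` has no cut vertex: deleting any vertex leaves a connected graph. -/
def NoCutVertex {V : Type u} (G : SimpleGraph V) : Prop :=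
  ∀ v : V, (G.induce {w | w ≠ v}).Connected

/-- `B` is a block of `G`: a maximal vertex set inducing a connected subgraph
without cut vertices. -/
def IsBlock {V : Type u} (G : SimpleGraph V) (B : Set V) : Prop :=
  (G.induce B).Connected ∧ NoCutVertex (G.induce B) ∧
    ∀ B' : Set V, B ⊆ B' → (G.induce B').Connected → NoCutVertex (G.induce B') → B' = B

/-- Every component of `C(G)` is a cut-path of `G`: `C(G)` is a linear forest
(acyclic with maximum degree at most 2) and every internal vertex (degree-2 vertex
of `C(G)`) has degree 2 in `G`. -/
def CutPathCondition {V : Type u} (G : SimpleGraph V) : Prop :=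
  (cutG G).IsAcyclic ∧ (∀ v : V, ((cutG G).neighborSet v).ncard ≤ 2) ∧
    ∀ v : V, ((cutG G).neighborSet v).ncard = 2 → (G.neighborSet v).ncard = 2

/-!
Between two leaves of the star the only path runs through the centre, so the edges of the star
need pairwise distinct colours, and colouring the edge of leaf `j` by `j` is conflict-free. The line
graph of the star is complete. For `n = 4` it is a triangle, whose line graph is again a triangle.
For `n ≥ 5` every later iterated line graph is Hamiltonian and not complete, with minimum degree at
least two: if `v₀ … v_{N-1}` is a Hamiltonian cycle of `G`, listing the edges of `G` grouped by
their first endpoint along the cycle gives a Hamiltonian cycle of `L(G)`. In a Hamiltonian graph any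
two vertices are joined by a path through the closing edge `v_{N-1} v₀` of the cycle, so giving that
edge colour `1` and all others colour `0` is conflict-free, while a non-complete graph needs two
colours.
-/

lemma List.Nodup.getLast?_ne_head? {α : Type*} {l : List α} (hl : l.Nodup) (h : 2 ≤ l.length) :
    ∀ a ∈ l.getLast?, ∀ b ∈ l.head?, a ≠ b := by
  obtain _ | ⟨x, _ | ⟨y, r⟩⟩ := l
  · simp at h
  · simp at h
  intro a ha b hb hab
  simp only [List.head?_cons, Option.mem_def, Option.some.injEq] at hb
  rw [List.getLast?_cons_cons, List.getLast?_eq_some_getLast (List.cons_ne_nil y r),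
    Option.mem_def, Option.some.injEq] at ha
  subst hb ha
  exact (List.nodup_cons.mp hl).1 (hab ▸ List.getLast_mem _)

lemma nontrivial_of_one_lt_natCard {α : Type*} (h : 1 < Nat.card α) : Nontrivial α :=
  have := Nat.finite_of_card_ne_zero (by omega : Nat.card α ≠ 0)
  Finite.one_lt_card_iff_nontrivial.mp h

section CFC

variable {V : Type u} {G : SimpleGraph V}

lemma SimpleGraph.Adj.exists_isPath_count_eq_one {u v : V} (h : G.Adj u v) (c : Sym2 V → ℕ) :
    ∃ p : G.Walk u v, p.IsPath ∧ ∃ color : ℕ, (p.edges.map c).count color = 1 :=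
  ⟨h.toWalk, h.isPath_toWalk, c s(u, v), by simp⟩

lemma cfcNum_eq_of_isCFCColoring {k : ℕ} {c : Sym2 V → ℕ} (hc : ∀ e ∈ G.edgeSet, c e < k)
    (hcfc : IsCFCColoring G c)
    (hmin : ∀ (t : ℕ) (c' : Sym2 V → ℕ), (∀ e ∈ G.edgeSet, c' e < t) → IsCFCColoring G c' → k ≤ t) :
    cfcNum G = k :=
  le_antisymm (Nat.sInf_le ⟨c, hc, hcfc⟩)
    (le_csInf ⟨k, c, hc, hcfc⟩ fun t ⟨c', hc', hcfc'⟩ => hmin t c' hc' hcfc')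

lemma IsCFCColoring.two_le_of_not_adj {c : Sym2 V → ℕ} {t : ℕ} (hcfc : IsCFCColoring G c)
    (hc : ∀ e ∈ G.edgeSet, c e < t) {u w : V} (huw : u ≠ w) (hn : ¬G.Adj u w) : 2 ≤ t := by
  by_contra! ht
  obtain ⟨p, -, color, hcount⟩ := hcfc u w huw
  have hconst : p.edges.map c = List.replicate p.length 0 := by
    rw [List.eq_replicate_iff]
    refine ⟨by simp, fun x hx => ?_⟩
    obtain ⟨e, he, rfl⟩ := List.mem_map.mp hx
    have := hc e (p.edges_subset_edgeSet he)
    omega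
  rw [hconst, List.count_replicate] at hcount
  have hlen : p.length = 1 := by split_ifs at hcount; omega
  exact hn (p.adj_of_length_eq_one hlen)

lemma cfcNum_top [Nontrivial V] : cfcNum (⊤ : SimpleGraph V) = 1 := by
  obtain ⟨a, b, hab⟩ := exists_pair_ne V
  refine cfcNum_eq_of_isCFCColoring (c := fun _ => 0) (fun _ _ => one_pos)
    (fun u v huv => Adj.exists_isPath_count_eq_one huv _) fun t c' hc' _ => ?_
  exact Nat.one_le_of_lt (hc' s(a, b) hab)

end CFC

section Star

variable {m : ℕ}

lemma mem_of_mem_edgeSet_completeBipartiteGraph_fin_one {e : Sym2 (Fin 1 ⊕ Fin m)}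
    (he : e ∈ (completeBipartiteGraph (Fin 1) (Fin m)).edgeSet) : Sum.inl 0 ∈ e := by
  induction e using Sym2.ind with
  | _ x y =>
    rcases x with x | x <;> rcases y with y | y <;> simp_all [Fin.fin_one_eq_zero]

def starEdge (j : Fin m) : (completeBipartiteGraph (Fin 1) (Fin m)).edgeSet :=
  ⟨s(Sum.inl 0, Sum.inr j), by simp⟩

lemma starEdge_bijective : Function.Bijective (starEdge (m := m)) := by
  refine ⟨fun i j h => by simpa [starEdge] using h, fun ⟨e, he⟩ => ?_⟩
  induction e using Sym2.ind with
  | _ x y =>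
    rcases x with x | x <;> rcases y with y | y <;> simp at he
    · exact ⟨y, by simp [starEdge, Fin.fin_one_eq_zero x]⟩
    · exact ⟨x, Subtype.ext (by simp [starEdge, Fin.fin_one_eq_zero y, Sym2.eq_swap])⟩

lemma natCard_edgeSet_completeBipartiteGraph_fin_one :
    Nat.card (completeBipartiteGraph (Fin 1) (Fin m)).edgeSet = m := by
  rw [← Nat.card_eq_of_bijective _ starEdge_bijective, Nat.card_eq_fintype_card, Fintype.card_fin]

lemma lineG_completeBipartiteGraph_fin_one :
    lineG (completeBipartiteGraph (Fin 1) (Fin m)) = ⊤ := by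
  ext e f
  exact ⟨fun h => h.1, fun h => ⟨h, Sum.inl 0,
    mem_of_mem_edgeSet_completeBipartiteGraph_fin_one e.2,
    mem_of_mem_edgeSet_completeBipartiteGraph_fin_one f.2⟩⟩

lemma isAcyclic_completeBipartiteGraph_fin_one :
    (completeBipartiteGraph (Fin 1) (Fin m)).IsAcyclic := by
  have : completeBipartiteGraph (Fin 1) (Fin m) = starGraph (Sum.inl 0) := by
    ext (x | x) (y | y) <;> simp [Fin.fin_one_eq_zero]
  exact this ▸ isAcyclic_starGraph _

lemma edges_eq_of_isPath_completeBipartiteGraph_fin_one {i j : Fin m} (hij : i ≠ j)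
    {p : (completeBipartiteGraph (Fin 1) (Fin m)).Walk (Sum.inr i) (Sum.inr j)} (hp : p.IsPath) :
    p.edges = [s(Sum.inl 0, Sum.inr i), s(Sum.inl 0, Sum.inr j)] := by
  let q : (completeBipartiteGraph (Fin 1) (Fin m)).Walk (Sum.inr i) (Sum.inr j) :=
    .cons (v := Sum.inl 0) (by simp) (.cons (by simp) .nil)
  have hq : q.IsPath := by simp [q, Walk.isPath_def, hij]
  have := (isAcyclic_completeBipartiteGraph_fin_one.subsingleton_path _ _).elim ⟨p, hp⟩ ⟨q, hq⟩
  rw [show p = q from congrArg Subtype.val this]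
  simp [q, Sym2.eq_swap]

def leafColoring (m : ℕ) : Sym2 (Fin 1 ⊕ Fin m) → ℕ :=
  Sym2.lift ⟨fun x y => Sum.elim (fun _ => 0) Fin.val x + Sum.elim (fun _ => 0) Fin.val y,
    fun _ _ => add_comm _ _⟩

lemma isCFCColoring_leafColoring :
    IsCFCColoring (completeBipartiteGraph (Fin 1) (Fin m)) (leafColoring m) := by
  intro u v huv
  by_cases hadj : (completeBipartiteGraph (Fin 1) (Fin m)).Adj u v
  · exact Adj.exists_isPath_count_eq_one hadj _
  rcases u with a | i <;> rcases v with b | j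
  · exact absurd (by simp [Fin.fin_one_eq_zero a, Fin.fin_one_eq_zero b]) huv
  · exact absurd (by simp) hadj
  · exact absurd (by simp) hadj
  · have hij : i ≠ j := fun h => huv (h ▸ rfl)
    let p : (completeBipartiteGraph (Fin 1) (Fin m)).Walk (Sum.inr i) (Sum.inr j) :=
      .cons (v := Sum.inl 0) (by simp) (.cons (by simp) .nil)
    refine ⟨p, by simp [p, Walk.isPath_def, hij], i, ?_⟩
    simp [p, leafColoring, Fin.val_ne_of_ne hij.symm]

lemma cfcNum_completeBipartiteGraph_fin_one :
    cfcNum (completeBipartiteGraph (Fin 1) (Fin m)) = m := by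
  refine cfcNum_eq_of_isCFCColoring (c := leafColoring m) (fun e he => ?_)
    isCFCColoring_leafColoring fun t c hc hcfc => ?_
  · obtain ⟨j, hj⟩ := starEdge_bijective.2 ⟨e, he⟩
    obtain rfl : s(Sum.inl 0, Sum.inr j) = e := congrArg Subtype.val hj
    simp [leafColoring]
  · by_contra! ht
    -- pigeonhole: two leaves get the same colour, and their only path runs through the centre
    let f : Fin m → Fin t := fun j => ⟨c (starEdge j), hc _ (starEdge j).2⟩
    obtain ⟨i, j, hij, hcol⟩ := Fintype.exists_ne_map_eq_of_card_lt f (by simpa using ht)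
    obtain ⟨p, hp, color, hcount⟩ := hcfc (Sum.inr i) (Sum.inr j) (by simpa using hij)
    have hcij : c s(Sum.inl 0, Sum.inr i) = c s(Sum.inl 0, Sum.inr j) := congrArg Fin.val hcol
    rw [edges_eq_of_isPath_completeBipartiteGraph_fin_one hij hp] at hcount
    simp only [List.map_cons, List.map_nil, hcij, List.count_cons, List.count_nil] at hcount
    split_ifs at hcount <;> omega

end Star

section LineGraph

variable {V : Type u} {G : SimpleGraph V}

lemma lineG_ne_top_of_disjoint {a b c d : V} (hab : G.Adj a b) (hcd : G.Adj c d)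
    (hac : a ≠ c) (had : a ≠ d) (hbc : b ≠ c) (hbd : b ≠ d) : lineG G ≠ ⊤ := by
  rw [ne_top_iff_exists_not_adj]
  refine ⟨⟨s(a, b), hab⟩, ⟨s(c, d), hcd⟩, fun h => by simp_all [Subtype.ext_iff], ?_⟩
  rintro ⟨-, v, hv₁, hv₂⟩
  simp only [Sym2.mem_iff] at hv₁ hv₂
  rcases hv₁ with rfl | rfl <;> rcases hv₂ with rfl | rfl <;> contradiction

lemma lineG_top_ne_top (h : 4 ≤ Nat.card V) : lineG (⊤ : SimpleGraph V) ≠ ⊤ := by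
  have := Nat.finite_of_card_ne_zero (by omega : Nat.card V ≠ 0)
  have := Fintype.ofFinite V
  obtain ⟨f⟩ := Function.Embedding.nonempty_of_card_le (α := Fin 4) (β := V)
    (by simpa [Nat.card_eq_fintype_card] using h)
  have hf : ∀ i j : Fin 4, i ≠ j → f i ≠ f j := fun _ _ => f.injective.ne
  exact lineG_ne_top_of_disjoint (a := f 0) (b := f 1) (c := f 2) (d := f 3)
    (hf _ _ (by decide)) (hf _ _ (by decide)) (hf _ _ (by decide)) (hf _ _ (by decide))
    (hf _ _ (by decide)) (hf _ _ (by decide))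

lemma lineG_top_eq_top (h : Nat.card V = 3) : lineG (⊤ : SimpleGraph V) = ⊤ := by
  have := Nat.finite_of_card_ne_zero (by omega : Nat.card V ≠ 0)
  have := Fintype.ofFinite V
  classical
  ext ⟨e, he⟩ ⟨f, hf⟩
  refine ⟨fun hef => hef.1, fun hef => ⟨hef, ?_⟩⟩
  induction e using Sym2.ind with | _ a b => ?_
  induction f using Sym2.ind with | _ c d => ?_
  by_contra! hshare
  have hab : a ≠ b := by simpa using he
  have hcd : c ≠ d := by simpa using hf
  have hfour : ({a, b, c, d} : Finset V).card = 4 := by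
    simp_all [Finset.card_insert_of_notMem]
  have := Finset.card_le_univ ({a, b, c, d} : Finset V)
  rw [hfour, ← Nat.card_eq_fintype_card, h] at this
  omega

lemma natCard_edgeSet_top [Finite V] :
    Nat.card (⊤ : SimpleGraph V).edgeSet = (Nat.card V).choose 2 := by
  classical
  have := Fintype.ofFinite V
  rw [Nat.card_eq_fintype_card, card_edgeSet, card_edgeFinset_top_eq_card_choose_two,
    Nat.card_eq_fintype_card]

def TwoLeMinDegree (G : SimpleGraph V) : Prop :=
  ∀ v, ∃ x y, x ≠ y ∧ G.Adj v x ∧ G.Adj v y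

lemma TwoLeMinDegree.exists_adj_ne (h : TwoLeMinDegree G) (v t : V) : ∃ x, G.Adj v x ∧ x ≠ t := by
  obtain ⟨x, y, hxy, hx, hy⟩ := h v
  by_cases hxt : x = t
  · exact ⟨y, hy, hxt ▸ hxy.symm⟩
  · exact ⟨x, hx, hxt⟩

lemma twoLeMinDegree_top (h : 3 ≤ Nat.card V) : TwoLeMinDegree (⊤ : SimpleGraph V) := by
  have := Nat.finite_of_card_ne_zero (by omega : Nat.card V ≠ 0)
  have := Fintype.ofFinite V
  obtain ⟨a, b, c, hab, hac, hbc⟩ :=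
    (Fintype.two_lt_card_iff (α := V)).mp (by rw [← Nat.card_eq_fintype_card]; omega)
  intro v
  by_cases hva : v = a
  · subst hva; exact ⟨b, c, hbc, by simpa using hab, by simpa using hac⟩
  by_cases hvb : v = b
  · subst hvb; exact ⟨a, c, hac, by simpa using hab.symm, by simpa using hbc⟩
  · exact ⟨a, b, hab, by simpa using hva, by simpa using hvb⟩

lemma twoLeMinDegree_lineG (h : TwoLeMinDegree G) : TwoLeMinDegree (lineG G) := by
  rintro ⟨e, he⟩
  induction e using Sym2.ind with | _ u v => ?_
  have huv : u ≠ v := G.ne_of_adj he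
  obtain ⟨x, hux, hxv⟩ := h.exists_adj_ne u v
  obtain ⟨y, hvy, hyu⟩ := h.exists_adj_ne v u
  refine ⟨⟨s(u, x), hux⟩, ⟨s(v, y), hvy⟩, ?_, ⟨?_, u, by simp, by simp⟩, ⟨?_, v, by simp, by simp⟩⟩
  all_goals simp_all [Subtype.ext_iff, eq_comm]

lemma lineG_ne_top_of_twoLeMinDegree (h : TwoLeMinDegree G) (hG : G ≠ ⊤) : lineG G ≠ ⊤ := by
  obtain ⟨u, w, huw, hn⟩ := ne_top_iff_exists_not_adj.mp hG
  obtain ⟨z, hwz, -⟩ := h.exists_adj_ne w w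
  obtain ⟨x, hux, hxz⟩ := h.exists_adj_ne u z
  exact lineG_ne_top_of_disjoint hux hwz huw (fun huz => hn (huz ▸ hwz.symm))
    (fun hxw => hn (hxw ▸ hux)) hxz

end LineGraph

section Hamiltonian

variable {V : Type u} {G : SimpleGraph V}

structure IsHamCycleList (G : SimpleGraph V) (l : List V) : Prop where
  nodup : l.Nodup
  mem : ∀ v, v ∈ l
  three_le_length : 3 ≤ l.length
  isChain : l.IsChain G.Adj
  adj_getLast_head : ∀ a ∈ l.getLast?, ∀ b ∈ l.head?, G.Adj a b

lemma exists_walk_support_eq {l : List V} (hl : l.IsChain G.Adj) {x y : V}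
    (hx : l.head? = some x) (hy : l.getLast? = some y) : ∃ p : G.Walk x y, p.support = l := by
  have hne : l ≠ [] := by rintro rfl; simp at hx
  rw [List.head?_eq_some_head hne, Option.some.injEq] at hx
  rw [List.getLast?_eq_some_getLast hne, Option.some.injEq] at hy
  exact ⟨(Walk.ofSupport l hne hl).copy hx hy, by simp⟩

lemma exists_isPath_mem_edges_of_isChain {l₁ l₂ : List V} (h₁ : l₁.IsChain G.Adj)
    (h₂ : l₂.IsChain G.Adj) (hnd : (l₁ ++ l₂).Nodup) {x a b y : V} (hx : l₁.head? = some x)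
    (ha : l₁.getLast? = some a) (hb : l₂.head? = some b) (hy : l₂.getLast? = some y)
    (hab : G.Adj a b) : ∃ p : G.Walk x y, p.IsPath ∧ s(a, b) ∈ p.edges := by
  obtain ⟨p₁, hp₁⟩ := exists_walk_support_eq h₁ hx ha
  obtain ⟨p₂, hp₂⟩ := exists_walk_support_eq h₂ hb hy
  refine ⟨p₁.append (.cons hab p₂), .mk' ?_, by simp⟩
  simpa [Walk.support_append, hp₁, hp₂] using hnd

lemma IsHamCycleList.exists_isPath_mem_edges {l : List V} (h : IsHamCycleList G l) {a b : V}
    (ha : l.getLast? = some a) (hb : l.head? = some b) {u v : V} (huv : u ≠ v) :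
    ∃ p : G.Walk u v, p.IsPath ∧ s(a, b) ∈ p.edges := by
  -- if `u` comes before `v`, walk from `v` to the end of `l`, then wrap around to `u`
  have key : ∀ {u v : V} (A B C : List V), l = A ++ u :: (B ++ v :: C) →
      ∃ p : G.Walk v u, p.IsPath ∧ s(a, b) ∈ p.edges := by
    intro u v A B C hl
    subst hl
    refine exists_isPath_mem_edges_of_isChain (l₁ := v :: C) (l₂ := A ++ [u])
      (h.isChain.suffix ?_) (h.isChain.prefix ?_) ?_ rfl ?_ ?_ (by simp) ?_
    · exact ⟨A ++ u :: B, by simp⟩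
    · exact ⟨B ++ v :: C, by simp⟩
    · refine (List.perm_append_comm.nodup_iff).mp (h.nodup.sublist ?_)
      simp
    · rw [← ha, show A ++ u :: (B ++ v :: C) = (A ++ u :: B) ++ v :: C by simp,
        List.getLast?_append]
      simp [List.getLast?_cons]
    · simpa using hb
    · exact h.adj_getLast_head a ha b hb
  obtain ⟨A, R, hAR⟩ := List.append_of_mem (h.mem u)
  have hv : v ∈ A ∨ v ∈ R := by
    have := h.mem v
    simp_all [eq_comm]
  rcases hv with hvA | hvR
  · obtain ⟨A₁, A₂, rfl⟩ := List.append_of_mem hvA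
    exact key A₁ A₂ R (by simp [hAR])
  · obtain ⟨B, C, rfl⟩ := List.append_of_mem hvR
    obtain ⟨p, hp, hab⟩ := key A B C hAR
    exact ⟨p.reverse, hp.reverse, by simpa using hab⟩

lemma IsHamCycleList.cfcNum_eq_two {l : List V} (h : IsHamCycleList G l) (hG : G ≠ ⊤) :
    cfcNum G = 2 := by
  classical
  have hne : l ≠ [] := by rintro rfl; simpa using h.three_le_length
  obtain ⟨a, ha⟩ : ∃ a, l.getLast? = some a := ⟨_, List.getLast?_eq_some_getLast hne⟩
  obtain ⟨b, hb⟩ : ∃ b, l.head? = some b := ⟨_, List.head?_eq_some_head hne⟩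
  obtain ⟨u, w, huw, hn⟩ := ne_top_iff_exists_not_adj.mp hG
  refine cfcNum_eq_of_isCFCColoring (c := fun e => if e = s(a, b) then 1 else 0)
    (fun e _ => by split_ifs <;> omega) (fun u v huv => ?_)
    fun t c hc hcfc => hcfc.two_le_of_not_adj hc huw hn
  obtain ⟨p, hp, hab⟩ := h.exists_isPath_mem_edges ha hb huv
  refine ⟨p, hp, 1, ?_⟩
  refine Eq.trans ?_ (List.count_eq_one_of_mem hp.edges_nodup hab)
  rw [List.count_eq_countP, List.countP_map, List.count_eq_countP]
  exact List.countP_congr fun e _ => by by_cases he : e = s(a, b) <;> simp [he]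

lemma exists_isHamCycleList_top (h : 3 ≤ Nat.card V) :
    ∃ l, IsHamCycleList (⊤ : SimpleGraph V) l := by
  have := Nat.finite_of_card_ne_zero (by omega : Nat.card V ≠ 0)
  have := Fintype.ofFinite V
  have hnd := Finset.univ.nodup_toList (α := V)
  have hlen : 3 ≤ (Finset.univ : Finset V).toList.length := by
    simpa [Nat.card_eq_fintype_card] using h
  refine ⟨_, hnd, by simp, hlen, ?_, ?_⟩
  · exact hnd.isChain.imp fun _ _ h => (top_adj _ _).mpr h
  · exact fun a ha b hb => (top_adj a b).mpr (hnd.getLast?_ne_head? (by omega) a ha b hb)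

end Hamiltonian

section SpannedEdges

variable {V : Type u} {G : SimpleGraph V} [DecidableRel G.Adj]

def edgesFrom (G : SimpleGraph V) [DecidableRel G.Adj] (x : V) (l : List V) : List G.edgeSet :=
  l.filterMap fun y => if h : G.Adj x y then some ⟨s(x, y), h⟩ else none

lemma mem_of_mem_edgesFrom {x : V} {l : List V} {e : G.edgeSet} (he : e ∈ edgesFrom G x l) :
    x ∈ (e : Sym2 V) := by
  obtain ⟨y, -, he⟩ := List.mem_filterMap.mp he
  split_ifs at he
  cases he
  exact Sym2.mem_mk_left x y

/-- Grouping the edges by their first endpoint along `l`, and listing each group backwards, makes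
the group of `x` in `x :: y :: _` end with `xy`, which meets every edge of the group of `y`. -/
def spannedEdges (G : SimpleGraph V) [DecidableRel G.Adj] : List V → List G.edgeSet
  | [] => []
  | x :: l => edgesFrom G x l.reverse ++ spannedEdges G l

lemma mem_of_mem_spannedEdges {l : List V} {e : G.edgeSet} (he : e ∈ spannedEdges G l) {v : V}
    (hv : v ∈ (e : Sym2 V)) : v ∈ l := by
  induction l with
  | nil => simp [spannedEdges] at he
  | cons x l ih =>
    simp only [spannedEdges, edgesFrom, List.mem_append, List.mem_filterMap, List.mem_reverse] at he
    rcases he with ⟨y, hy, he⟩ | he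
    · split_ifs at he with hxy
      cases he
      simp only [Sym2.mem_iff] at hv
      rcases hv with rfl | rfl <;> simp [hy]
    · exact List.mem_cons_of_mem x (ih he)

lemma mem_spannedEdges {l : List V} {x y : V} (hx : x ∈ l) (hy : y ∈ l) (hxy : G.Adj x y) :
    ⟨s(x, y), hxy⟩ ∈ spannedEdges G l := by
  induction l with
  | nil => simp at hx
  | cons z l ih =>
    simp only [spannedEdges, edgesFrom, List.mem_append, List.mem_filterMap, List.mem_reverse]
    rcases List.mem_cons.mp hx with rfl | hx' <;> rcases List.mem_cons.mp hy with rfl | hy'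
    · exact absurd hxy (G.loopless.irrefl _)
    · exact Or.inl ⟨y, hy', by simp [hxy]⟩
    · exact Or.inl ⟨x, hx', by simp [hxy.symm, Sym2.eq_swap]⟩
    · exact Or.inr (ih hx' hy')

lemma nodup_spannedEdges {l : List V} (hl : l.Nodup) : (spannedEdges G l).Nodup := by
  induction l with
  | nil => simp [spannedEdges]
  | cons x l ih =>
    rw [List.nodup_cons] at hl
    refine List.nodup_append.mpr ⟨?_, ih hl.2, ?_⟩
    · refine List.Nodup.filterMap (fun y y' e he he' => ?_) (List.nodup_reverse.mpr hl.2)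
      split_ifs at he he' <;> simp only [Option.mem_def, reduceCtorEq, Option.some.injEq] at he he'
      exact Sym2.congr_right.mp (congrArg Subtype.val (he.trans he'.symm))
    · rintro e he _ hf rfl
      exact hl.1 (mem_of_mem_spannedEdges hf (mem_of_mem_edgesFrom he))

lemma mem_of_mem_head?_spannedEdges {y : V} {l : List V} (hl : (y :: l).IsChain G.Adj) :
    ∀ e ∈ (spannedEdges G (y :: l)).head?, y ∈ (e : Sym2 V) := by
  intro e he
  cases l with
  | nil => simp [spannedEdges, edgesFrom] at he
  | cons z l =>
    have hne : edgesFrom G y (z :: l).reverse ≠ [] := by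
      simp [edgesFrom, List.filterMap_append, hl.rel]
    rw [spannedEdges, List.head?_append_of_ne_nil _ hne] at he
    exact mem_of_mem_edgesFrom (List.mem_of_mem_head? he)

lemma isChain_spannedEdges {l : List V} (hl : l.IsChain G.Adj) (hnd : l.Nodup) :
    (spannedEdges G l).IsChain (lineG G).Adj := by
  induction l with
  | nil => simp [spannedEdges]
  | cons x l ih =>
    have hnd' := List.nodup_append.mp (nodup_spannedEdges (G := G) hnd)
    rw [List.nodup_cons] at hnd
    refine List.IsChain.append ?_ (ih hl.tail hnd.2) ?_
    · exact (hnd'.1.imp_of_mem fun he hf hef =>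
        ⟨hef, x, mem_of_mem_edgesFrom he, mem_of_mem_edgesFrom hf⟩).isChain
    · intro e he f hf
      cases l with
      | nil => simp [spannedEdges] at hf
      | cons y l =>
        obtain rfl : ⟨s(x, y), hl.rel⟩ = e := by
          simpa [edgesFrom, List.filterMap_append, hl.rel] using he
        refine ⟨fun hef => hnd.1 ?_, y, Sym2.mem_mk_right x y,
          mem_of_mem_head?_spannedEdges hl.tail f hf⟩
        exact mem_of_mem_spannedEdges (List.mem_of_mem_head? hf)
          (hef ▸ Sym2.mem_mk_left x y)

lemma head?_spannedEdges {l : List V} {x a : V} (hx : l.head? = some x)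
    (ha : l.getLast? = some a) (hxa : G.Adj x a) :
    (spannedEdges G l).head? = some ⟨s(x, a), hxa⟩ := by
  obtain ⟨l, rfl⟩ : ∃ l', l = x :: l' := List.head?_eq_some_iff.mp hx
  cases l with
  | nil =>
    obtain rfl : x = a := by simpa using ha
    exact absurd hxa (G.loopless.irrefl x)
  | cons y l =>
    obtain ⟨r, hr⟩ : ∃ r, (y :: l).reverse = a :: r := by
      rw [← List.head?_eq_some_iff, List.head?_reverse]
      simpa using ha
    simp [spannedEdges, hr, edgesFrom, hxa]

lemma getLast?_spannedEdges_append_pair (L : List V) {p q : V} (hpq : G.Adj p q) :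
    (spannedEdges G (L ++ [p, q])).getLast? = some ⟨s(p, q), hpq⟩ := by
  induction L with
  | nil => simp [spannedEdges, edgesFrom, hpq]
  | cons z L ih => simp [spannedEdges, ih]

lemma three_le_length_spannedEdges {l : List V} (h : IsHamCycleList G l) :
    3 ≤ (spannedEdges G l).length := by
  obtain ⟨x, y, z, r, rfl⟩ : ∃ x y z r, l = x :: y :: z :: r := by
    match l, h.three_le_length with
    | x :: y :: z :: r, _ => exact ⟨x, y, z, r, rfl⟩
  have hxy : G.Adj x y := h.isChain.rel
  have hyz : G.Adj y z := h.isChain.tail.rel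
  have hza : G.Adj ((z :: r).getLast (List.cons_ne_nil z r)) x :=
    h.adj_getLast_head _ (by simp [List.getLast?_eq_some_getLast]) x rfl
  have hx : x ∉ y :: z :: r := (List.nodup_cons.mp h.nodup).1
  have hy : y ∉ z :: r := (List.nodup_cons.mp (List.nodup_cons.mp h.nodup).2).1
  have ha := List.getLast_mem (List.cons_ne_nil z r)
  have hxz : x ≠ z := fun e => hx (by simp [e])
  have hya : y ≠ (z :: r).getLast (List.cons_ne_nil z r) := fun e => hy (e ▸ ha)
  have hsub : [⟨s(x, y), hxy⟩, ⟨s(y, z), hyz⟩, ⟨s(x, _), hza.symm⟩] ⊆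
      spannedEdges G (x :: y :: z :: r) := by
    simp only [List.cons_subset, List.nil_subset, and_true]
    exact ⟨mem_spannedEdges (by simp) (by simp) _, mem_spannedEdges (by simp) (by simp) _,
      mem_spannedEdges (by simp) (by simp [ha]) _⟩
  refine (List.subperm_of_subset ?_ hsub).length_le
  simp [Subtype.ext_iff, hxz, hya, hxy.ne, hxy.ne.symm]

lemma isHamCycleList_spannedEdges {l : List V} (h : IsHamCycleList G l) :
    IsHamCycleList (lineG G) (spannedEdges G l) where
  nodup := nodup_spannedEdges h.nodup
  mem := fun ⟨e, he⟩ => by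
    induction e using Sym2.ind with | _ x y => exact mem_spannedEdges (h.mem x) (h.mem y) he
  three_le_length := three_le_length_spannedEdges h
  isChain := isChain_spannedEdges h.isChain h.nodup
  adj_getLast_head := by
    have hne := (nodup_spannedEdges (G := G) h.nodup).getLast?_ne_head?
      (by have := three_le_length_spannedEdges h; omega)
    have h3 := h.three_le_length
    obtain ⟨L, p, q, rfl⟩ : ∃ L p q, l = L ++ [p, q] := by
      rcases l.eq_nil_or_concat with rfl | ⟨L', q, rfl⟩
      · simp at h3
      rcases L'.eq_nil_or_concat with rfl | ⟨L, p, rfl⟩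
      · simp at h3
      exact ⟨L, p, q, by simp⟩
    obtain ⟨x, hx⟩ : ∃ x, (L ++ [p, q]).head? = some x := ⟨_, List.head?_eq_some_head (by simp)⟩
    have hpq : G.Adj p q := List.isChain_pair.mp h.isChain.right_of_append
    have hqx : G.Adj q x := h.adj_getLast_head q (by simp) x hx
    rw [getLast?_spannedEdges_append_pair L hpq, head?_spannedEdges hx (by simp) hqx.symm] at hne ⊢
    simp only [Option.mem_def, Option.some.injEq, forall_eq'] at hne ⊢
    exact ⟨hne, q, Sym2.mem_mk_right p q, Sym2.mem_mk_right x q⟩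

end SpannedEdges

lemma iterLine_induction {V : Type u} (G : SimpleGraph V) (P : (W : Type u) → SimpleGraph W → Prop)
    (step : ∀ (W : Type u) (H : SimpleGraph W), P W H → P H.edgeSet (lineG H)) {k₀ k : ℕ}
    (hk : k₀ ≤ k) (h₀ : P _ (iterLine G k₀).2) : P _ (iterLine G k).2 := by
  induction k, hk using Nat.le_induction with
  | base => exact h₀
  | succ k _ ih => exact step _ _ ih

lemma cfcNum_iterLine_of_natCard_eq_three {V : Type u} (G : SimpleGraph V) {k₀ k : ℕ}
    (hk : k₀ ≤ k) (htop : (iterLine G k₀).2 = ⊤) (hcard : Nat.card (iterLine G k₀).1 = 3) :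
    cfcNum (iterLine G k).2 = 1 := by
  obtain ⟨hcard, htop⟩ := iterLine_induction G (fun W H => Nat.card W = 3 ∧ H = ⊤)
    (fun W H ⟨hW, hH⟩ => by
      subst hH
      have := Nat.finite_of_card_ne_zero (by omega : Nat.card W ≠ 0)
      exact ⟨by rw [natCard_edgeSet_top, hW]; rfl, lineG_top_eq_top hW⟩) hk ⟨hcard, htop⟩
  have := nontrivial_of_one_lt_natCard (by omega : 1 < Nat.card (iterLine G k).1)
  rw [htop]
  exact cfcNum_top

lemma cfcNum_iterLine_of_four_le_natCard {V : Type u} (G : SimpleGraph V) {k₀ k : ℕ}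
    (hk : k₀ < k) (htop : (iterLine G k₀).2 = ⊤) (hcard : 4 ≤ Nat.card (iterLine G k₀).1) :
    cfcNum (iterLine G k).2 = 2 := by
  classical
  have base : ∀ (W : Type u) (H : SimpleGraph W), H = ⊤ → 4 ≤ Nat.card W →
      (∃ l, IsHamCycleList (lineG H) l) ∧ TwoLeMinDegree (lineG H) ∧ lineG H ≠ ⊤ := by
    rintro W H rfl hW
    obtain ⟨l, hl⟩ := exists_isHamCycleList_top (by omega : 3 ≤ Nat.card W)
    exact ⟨⟨_, isHamCycleList_spannedEdges hl⟩,
      twoLeMinDegree_lineG (twoLeMinDegree_top (by omega)), lineG_top_ne_top hW⟩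
  obtain ⟨⟨l, hl⟩, -, hne⟩ := iterLine_induction G
    (fun W H => (∃ l, IsHamCycleList H l) ∧ TwoLeMinDegree H ∧ H ≠ ⊤)
    (fun W H ⟨⟨l, hl⟩, h2, hne⟩ => ⟨⟨_, isHamCycleList_spannedEdges hl⟩,
      twoLeMinDegree_lineG h2, lineG_ne_top_of_twoLeMinDegree h2 hne⟩)
    hk (base _ _ htop hcard)
  exact hl.cfcNum_eq_two hne

/-- For the star K_{1,n-1} of order n ≥ 4: cfc(G) = n-1, cfc(L(G)) = 1, and for
k ≥ 2: cfc(L^k(G)) = 1 if n = 4 and cfc(L^k(G)) = 2 if n ≥ 5. -/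
theorem stmt_19 (n : ℕ) (hn : 4 ≤ n) :
    cfcNum (completeBipartiteGraph (Fin 1) (Fin (n - 1))) = n - 1 ∧
      cfcNum (iterLine (completeBipartiteGraph (Fin 1) (Fin (n - 1))) 1).2 = 1 ∧
      ∀ k : ℕ, 2 ≤ k →
        (n = 4 → cfcNum (iterLine (completeBipartiteGraph (Fin 1) (Fin (n - 1))) k).2 = 1) ∧
        (5 ≤ n → cfcNum (iterLine (completeBipartiteGraph (Fin 1) (Fin (n - 1))) k).2 = 2) := by
  have htop : (iterLine (completeBipartiteGraph (Fin 1) (Fin (n - 1))) 1).2 = ⊤ :=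
    lineG_completeBipartiteGraph_fin_one
  have hcard : Nat.card (iterLine (completeBipartiteGraph (Fin 1) (Fin (n - 1))) 1).1 = n - 1 :=
    natCard_edgeSet_completeBipartiteGraph_fin_one
  refine ⟨cfcNum_completeBipartiteGraph_fin_one, ?_, fun k hk => ⟨fun h4 => ?_, fun h5 => ?_⟩⟩
  · have := nontrivial_of_one_lt_natCard (hcard ▸ (by omega : 1 < n - 1))
    rw [htop]
    exact cfcNum_top
  · exact cfcNum_iterLine_of_natCard_eq_three _ (by omega : 1 ≤ k) htop (by omega)
  · exact cfcNum_iterLine_of_four_le_natCard _ (by omega : 1 < k) htop (by omega)
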